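/- Let B be the bilateral backward shift on ℓ^p(ℤ, ω) with sup_{n∈ℤ} ω_n/ω_{n+1} < ∞. If there exists x ∈ ℓ^p(ℤ, ω) such that the projective orbit Orb(ℂx, B) has a non-zero norm limit point, then B is supercyclic, i.e. there exists z such that {λ B^n z : λ ∈ ℂ, n ∈ ℕ} is dense in ℓ^p(ℤ, ω). -/

import Mathlib

open MeasureTheory Filter Topology
open scoped ENNReal

noncomputable section

/-- The weighted measure on the index set `I` giving the point `k` mass `(ω k) ^ p`,
so that `Lp ℂ p (wMeasure p ω)` is the weighted sequence space `ℓ^p(I, ω)`. -/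
def wMeasure {I : Type*} [MeasurableSpace I] (p : ENNReal) (ω : I → ℝ) : Measure I :=
  Measure.sum (fun k => ENNReal.ofReal ((ω k) ^ p.toReal) • Measure.dirac k)

variable {p : ENNReal} {ω : ℤ → ℝ}

example (s : Set ℤ) : MeasurableSet s := MeasurableSpace.measurableSet_top

lemma wM_singleton (k : ℤ) : wMeasure p ω {k} = ENNReal.ofReal ((ω k) ^ p.toReal) := by
  rw [wMeasure, Measure.sum_apply _ MeasurableSpace.measurableSet_top]
  rw [tsum_eq_single k]
  · simp [Measure.dirac_apply]
  · intro j hj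
    simp [Measure.smul_apply, Measure.dirac_apply' _ (MeasurableSpace.measurableSet_top : MeasurableSet {k}),
      Set.indicator_of_notMem, hj]

lemma wM_lintegral (f : ℤ → ℝ≥0∞) :
    ∫⁻ a, f a ∂(wMeasure p ω) = ∑' k, f k * ENNReal.ofReal ((ω k) ^ p.toReal) := by
  rw [wMeasure, lintegral_sum_measure]
  congr 1; ext k
  rw [lintegral_smul_measure, lintegral_dirac _, mul_comm, smul_eq_mul]

variable [Fact (1 ≤ p)] (hp : p ≠ ∞) (hω : ∀ k, 0 < ω k)

lemma pt_pos (hp : p ≠ ∞) : 0 < p.toReal :=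
  ENNReal.toReal_pos (lt_of_lt_of_le one_pos (Fact.out : 1 ≤ p)).ne' hp

lemma wM_singleton_pos (hp : p ≠ ∞) (hω : ∀ k, 0 < ω k) (k : ℤ) :
    0 < wMeasure p ω {k} := by
  rw [wM_singleton]
  exact ENNReal.ofReal_pos.2 (Real.rpow_pos_of_pos (hω k) _)

lemma ae_eq_iff_eq {f g : ℤ → ℂ} (hp : p ≠ ∞) (hω : ∀ k, 0 < ω k) :
    f =ᵐ[wMeasure p ω] g ↔ f = g := by
  constructor
  · intro h
    funext k
    by_contra hk
    have h1 : wMeasure p ω {x | f x ≠ g x} = 0 := h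
    have h2 : wMeasure p ω {k} ≤ wMeasure p ω {x | f x ≠ g x} :=
      measure_mono (by simpa using hk)
    exact absurd (le_antisymm (h1 ▸ h2) zero_le) (wM_singleton_pos hp hω k).ne'
  · rintro rfl; rfl

lemma Lp_ext {v w : Lp ℂ p (wMeasure p ω)} (hp : p ≠ ∞) (hω : ∀ k, 0 < ω k)
    (h : ∀ k, v k = w k) : v = w := by
  ext1
  exact (ae_eq_iff_eq hp hω).2 (funext h)

lemma coe_smul (hp : p ≠ ∞) (hω : ∀ k, 0 < ω k) (c : ℂ) (v : Lp ℂ p (wMeasure p ω)) (k : ℤ) :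
    (c • v) k = c * v k := by
  have := (ae_eq_iff_eq (f := ((c • v : Lp ℂ p (wMeasure p ω)) : ℤ → ℂ)) hp hω).1
    (Lp.coeFn_smul c v)
  exact congrFun this k

lemma coe_sub (hp : p ≠ ∞) (hω : ∀ k, 0 < ω k) (v w : Lp ℂ p (wMeasure p ω)) (k : ℤ) :
    (v - w) k = v k - w k :=
  congrFun ((ae_eq_iff_eq hp hω).1 (Lp.coeFn_sub v w)) k

lemma coe_add (hp : p ≠ ∞) (hω : ∀ k, 0 < ω k) (v w : Lp ℂ p (wMeasure p ω)) (k : ℤ) :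
    (v + w) k = v k + w k :=
  congrFun ((ae_eq_iff_eq hp hω).1 (Lp.coeFn_add v w)) k

lemma coe_zero (hp : p ≠ ∞) (hω : ∀ k, 0 < ω k) (k : ℤ) :
    (0 : Lp ℂ p (wMeasure p ω)) k = 0 :=
  congrFun ((ae_eq_iff_eq hp hω).1 (Lp.coeFn_zero ℂ p (wMeasure p ω))) k

lemma eLpNorm_formula (hp : p ≠ ∞) (f : ℤ → ℂ) :
    eLpNorm f p (wMeasure p ω)
      = (∑' k, (‖f k‖₊ : ℝ≥0∞) ^ p.toReal * ENNReal.ofReal ((ω k) ^ p.toReal)) ^ (1 / p.toReal) := by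
  rw [eLpNorm_eq_lintegral_rpow_enorm_toReal (lt_of_lt_of_le one_pos (Fact.out : 1 ≤ p)).ne' hp,
    wM_lintegral]
  rfl

-- g-term identity: the ENNReal summand equals ofReal of real quantity
lemma term_eq (hp : p ≠ ∞) (hω : ∀ k, 0 < ω k) (f : ℤ → ℂ) (k : ℤ) :
    (‖f k‖₊ : ℝ≥0∞) ^ p.toReal * ENNReal.ofReal ((ω k) ^ p.toReal)
      = ENNReal.ofReal ((‖f k‖ * ω k) ^ p.toReal) := by
  rw [← enorm_eq_nnnorm, ← ofReal_norm,
    ENNReal.ofReal_rpow_of_nonneg (norm_nonneg _) (pt_pos hp).le,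
    ← ENNReal.ofReal_mul (by positivity), ← Real.mul_rpow (norm_nonneg _) (hω k).le]

lemma sum_ne_top (hp : p ≠ ∞) (v : Lp ℂ p (wMeasure p ω)) :
    ∑' k, (‖v k‖₊ : ℝ≥0∞) ^ p.toReal * ENNReal.ofReal ((ω k) ^ p.toReal) ≠ ∞ := by
  have h := Lp.eLpNorm_lt_top v
  rw [eLpNorm_formula hp] at h
  intro htop
  rw [htop, one_div, ENNReal.top_rpow_of_pos (inv_pos.2 (pt_pos hp))] at h
  exact lt_irrefl _ h

lemma norm_eq (hp : p ≠ ∞) (v : Lp ℂ p (wMeasure p ω)) :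
    ‖v‖ = ((∑' k, (‖v k‖₊ : ℝ≥0∞) ^ p.toReal
      * ENNReal.ofReal ((ω k) ^ p.toReal)) ^ (1 / p.toReal)).toReal := by
  rw [Lp.norm_def, eLpNorm_formula hp]

lemma eval_le_norm (hp : p ≠ ∞) (hω : ∀ k, 0 < ω k) (v : Lp ℂ p (wMeasure p ω)) (k : ℤ) :
    ‖v k‖ * ω k ≤ ‖v‖ := by
  have h1 : (‖v k‖₊ : ℝ≥0∞) ^ p.toReal * ENNReal.ofReal ((ω k) ^ p.toReal)
      ≤ ∑' k, (‖v k‖₊ : ℝ≥0∞) ^ p.toReal * ENNReal.ofReal ((ω k) ^ p.toReal) :=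
    ENNReal.le_tsum k
  have h2 := ENNReal.rpow_le_rpow h1 (one_div_pos.2 (pt_pos hp)).le
  have hnn : (0:ℝ) ≤ ‖v k‖ * ω k := mul_nonneg (norm_nonneg _) (hω k).le
  rw [term_eq hp hω, ENNReal.ofReal_rpow_of_nonneg (Real.rpow_nonneg hnn _) (one_div_pos.2 (pt_pos hp)).le,
    ← Real.rpow_mul hnn, mul_one_div_cancel (pt_pos hp).ne', Real.rpow_one] at h2
  rw [norm_eq hp]
  have hne : (∑' k, (‖v k‖₊ : ℝ≥0∞) ^ p.toReal
      * ENNReal.ofReal ((ω k) ^ p.toReal)) ^ (1 / p.toReal) ≠ ∞ :=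
    (ENNReal.rpow_lt_top_of_nonneg (one_div_pos.2 (pt_pos hp)).le (sum_ne_top hp v)).ne
  calc ‖v k‖ * ω k = (ENNReal.ofReal (‖v k‖ * ω k)).toReal := (ENNReal.toReal_ofReal hnn).symm
    _ ≤ _ := ENNReal.toReal_mono hne h2

lemma tail_decay (hp : p ≠ ∞) (hω : ∀ k, 0 < ω k) (v : Lp ℂ p (wMeasure p ω)) :
    Tendsto (fun m => ‖v m‖ * ω m) cofinite (𝓝 0) := by
  have h0 := ENNReal.tendsto_cofinite_zero_of_tsum_ne_top (sum_ne_top hp v)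
  rw [Metric.tendsto_nhds]
  intro ε hε
  have h1 : ∀ᶠ m in cofinite,
      (‖v m‖₊ : ℝ≥0∞) ^ p.toReal * ENNReal.ofReal ((ω m) ^ p.toReal)
        < ENNReal.ofReal (ε ^ p.toReal) := by
    refine (ENNReal.nhds_zero_basis.tendsto_right_iff.1 h0) _ ?_
    exact ENNReal.ofReal_pos.2 (Real.rpow_pos_of_pos hε _)
  filter_upwards [h1] with m hm
  rw [term_eq hp hω] at hm
  rw [ENNReal.ofReal_lt_ofReal_iff (Real.rpow_pos_of_pos hε _)] at hm
  have hnn : (0:ℝ) ≤ ‖v m‖ * ω m := mul_nonneg (norm_nonneg _) (hω m).le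
  have hlt : ‖v m‖ * ω m < ε := by
    by_contra hcon
    push_neg at hcon
    exact absurd (Real.rpow_le_rpow hε.le hcon (pt_pos hp).le) (not_le.2 hm)
  rw [Real.dist_eq, sub_zero, abs_of_nonneg hnn]
  exact hlt

lemma exists_coord_ne_zero (hp : p ≠ ∞) (hω : ∀ k, 0 < ω k)
    {v : Lp ℂ p (wMeasure p ω)} (hv : v ≠ 0) : ∃ k, v k ≠ 0 := by
  by_contra h
  push_neg at h
  exact hv (Lp_ext hp hω (fun k => by rw [h k, coe_zero hp hω]))

lemma pow_coe (hp : p ≠ ∞) (hω : ∀ k, 0 < ω k)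
    (B : Lp ℂ p (wMeasure p ω) →L[ℂ] Lp ℂ p (wMeasure p ω))
    (hB : ∀ (x : Lp ℂ p (wMeasure p ω)) (k : ℤ), B x k = x (k + 1)) :
    ∀ (m : ℕ) (v : Lp ℂ p (wMeasure p ω)) (k : ℤ), ((B ^ m) v) k = v (k + m) := by
  intro m
  induction m with
  | zero => intro v k; simp [ContinuousLinearMap.one_apply]
  | succ m ih =>
      intro v k
      rw [pow_succ, ContinuousLinearMap.mul_apply, ih (B v) k, hB v (k + m)]
      congr 1
      push_cast
      ring

lemma omega_bound {C : ℝ} (hC : ∀ k, ω k ≤ C * ω (k + 1)) (hC0 : 0 ≤ C) (a : ℤ) :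
    ∀ n : ℕ, ω a ≤ C ^ n * ω (a + n) := by
  intro n
  induction n with
  | zero => simp
  | succ n ih =>
      calc ω a ≤ C ^ n * ω (a + n) := ih
        _ ≤ C ^ n * (C * ω (a + n + 1)) := by
            exact mul_le_mul_of_nonneg_left (hC (a + n)) (pow_nonneg hC0 n)
        _ = C ^ (n + 1) * ω (a + (n + 1)) := by push_cast; ring_nf
  
lemma omega_bound' {C : ℝ} (hC : ∀ k, ω k ≤ C * ω (k + 1)) (hC0 : 0 ≤ C) {a b : ℤ}
    (hab : a ≤ b) : ω a ≤ C ^ (b - a).toNat * ω b := by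
  have := omega_bound hC hC0 a (b - a).toNat
  rwa [show a + ((b - a).toNat : ℤ) = b by omega] at this

lemma tendsto_int_cofinite {g : ℕ → ℤ} (h : Tendsto g atTop atTop ∨ Tendsto g atTop atBot) :
    Tendsto g atTop cofinite := by
  rcases h with h | h
  · exact h.mono_right (by rw [Int.cofinite_eq]; exact le_sup_right)
  · exact h.mono_right (by rw [Int.cofinite_eq]; exact le_sup_left)

lemma salas (hp : p ≠ ∞) (hω : ∀ k, 0 < ω k)
    {C : ℝ} (hC1 : 1 ≤ C) (hC : ∀ k, ω k ≤ C * ω (k + 1))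
    (B : Lp ℂ p (wMeasure p ω) →L[ℂ] Lp ℂ p (wMeasure p ω))
    (hB : ∀ (x : Lp ℂ p (wMeasure p ω)) (k : ℤ), B x k = x (k + 1))
    (x : Lp ℂ p (wMeasure p ω))
    (lam : ℕ → ℂ) (n : ℕ → ℕ) (hn : StrictMono n)
    (y : Lp ℂ p (wMeasure p ω)) (hy : y ≠ 0)
    (hconv : Tendsto (fun k => lam k • (B ^ n k) x) atTop (nhds y)) :
    ∀ q : ℤ, ∀ ε > 0, ∀ M : ℕ, ∃ m : ℕ, M ≤ m ∧ ω (q + m) * ω (q - m) < ε := by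
  have hC0 : (0:ℝ) ≤ C := le_trans zero_le_one hC1
  have hntop : Tendsto (fun l => (n l : ℤ)) atTop atTop :=
    tendsto_natCast_atTop_atTop.comp hn.tendsto_atTop
  -- the error sequence
  set E : ℕ → ℝ := fun k => ‖lam k • (B ^ n k) x - y‖ with hE
  have hE0 : Tendsto E atTop (𝓝 0) := by
    rw [tendsto_iff_norm_sub_tendsto_zero] at hconv
    exact hconv
  -- coordinate estimate
  have hest : ∀ (i : ℤ) (k : ℕ), ‖lam k * x (i + n k) - y i‖ * ω i ≤ E k := by
    intro i k
    have h := eval_le_norm hp hω (lam k • (B ^ n k) x - y) i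
    rwa [coe_sub hp hω, coe_smul hp hω, pow_coe hp hω B hB] at h
  -- coordinatewise convergence
  have hcoord : ∀ i : ℤ, Tendsto (fun k => lam k * x (i + n k)) atTop (𝓝 (y i)) := by
    intro i
    rw [tendsto_iff_norm_sub_tendsto_zero]
    apply squeeze_zero (fun k => norm_nonneg _) (g := fun k => E k * (ω i)⁻¹)
    · intro k
      rw [← mul_le_mul_iff_of_pos_right (hω i), inv_mul_cancel_right₀ (hω i).ne']
      exact hest i k
    · simpa using hE0.mul_const (ω i)⁻¹
  obtain ⟨j, hj⟩ := exists_coord_ne_zero hp hω hy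
  have habs : Tendsto (fun k => ‖lam k‖ * ‖x (j + n k)‖) atTop (𝓝 ‖y j‖) := by
    have := (hcoord j).norm
    simpa [norm_mul] using this
  set c : ℝ := ‖y j‖ / 2 with hc
  have hc0 : 0 < c := half_pos (norm_pos_iff.2 hj)
  have hlam_ev : ∀ᶠ l in atTop, c ≤ ‖lam l‖ * ‖x (j + n l)‖ :=
    habs.eventually (eventually_ge_nhds (by rw [hc]; linarith [norm_pos_iff.2 hj]))
  -- decay of x along j + n l
  have hA : Tendsto (fun l => ‖x (j + n l)‖ * ω (j + n l)) atTop (𝓝 0) :=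
    (tail_decay hp hω x).comp (tendsto_int_cofinite (Or.inl
      (tendsto_atTop_add_const_left _ j hntop)))
  intro q ε hε M
  -- choose κ with x (j + n κ) ≠ 0 and n κ large
  have hev : ∀ᶠ κ in atTop, x (j + n κ) ≠ 0 ∧ (2*q - 2*j : ℤ) ≤ n κ := by
    refine (hlam_ev.mono ?_).and (hntop.eventually_ge_atTop _)
    intro κ hκ h0
    rw [h0, norm_zero, mul_zero] at hκ
    exact absurd hκ (not_le.2 hc0)
  obtain ⟨κ, hxκ, hκq⟩ := hev.exists
  set i₀ : ℤ := j + n κ with hi₀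
  -- decay of ‖lam l‖ ‖x i₀‖ ω (i₀ - n l)
  have hbot : Tendsto (fun l => i₀ - (n l : ℤ)) atTop atBot := by
    have h1 : Tendsto (fun l => -(n l : ℤ)) atTop atBot := tendsto_neg_atBot_iff.2 hntop
    simpa [sub_eq_add_neg] using tendsto_atBot_add_const_left atTop i₀ h1
  have htaily : Tendsto (fun l => ‖y (i₀ - n l)‖ * ω (i₀ - n l)) atTop (𝓝 0) :=
    (tail_decay hp hω y).comp (tendsto_int_cofinite (Or.inr hbot))
  have hB' : Tendsto (fun l => ‖lam l‖ * ‖x i₀‖ * ω (i₀ - n l)) atTop (𝓝 0) := by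
    apply squeeze_zero (fun l => by
      have := (hω (i₀ - n l)).le
      positivity) (g := fun l => E l + ‖y (i₀ - n l)‖ * ω (i₀ - n l))
    · intro l
      have htri : ‖lam l * x i₀‖ ≤ ‖lam l * x i₀ - y (i₀ - n l)‖ + ‖y (i₀ - n l)‖ := by
        calc ‖lam l * x i₀‖ = ‖(lam l * x i₀ - y (i₀ - n l)) + y (i₀ - n l)‖ := by ring_nf
          _ ≤ _ := norm_add_le _ _
      have hco := hest (i₀ - n l) l
      rw [show i₀ - (n l : ℤ) + (n l : ℤ) = i₀ by ring] at hco
      have hω0 := (hω (i₀ - n l)).le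
      calc ‖lam l‖ * ‖x i₀‖ * ω (i₀ - n l) = ‖lam l * x i₀‖ * ω (i₀ - n l) := by
            rw [norm_mul]
        _ ≤ (‖lam l * x i₀ - y (i₀ - n l)‖ + ‖y (i₀ - n l)‖) * ω (i₀ - n l) :=
            mul_le_mul_of_nonneg_right htri hω0
        _ = ‖lam l * x i₀ - y (i₀ - n l)‖ * ω (i₀ - n l)
              + ‖y (i₀ - n l)‖ * ω (i₀ - n l) := by ring
        _ ≤ E l + ‖y (i₀ - n l)‖ * ω (i₀ - n l) := by
            exact add_le_add_left hco _
    · simpa using hE0.add htaily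
  have hx₀ : (0:ℝ) < ‖x i₀‖ := norm_pos_iff.2 hxκ
  have hmain : Tendsto (fun l => ω (j + n l) * ω (i₀ - n l)) atTop (𝓝 0) := by
    apply squeeze_zero' (Eventually.of_forall (fun l => mul_nonneg (hω _).le (hω _).le))
      (g := fun l => (‖x (j + n l)‖ * ω (j + n l)) * (‖lam l‖ * ‖x i₀‖ * ω (i₀ - n l))
        / (c * ‖x i₀‖))
    · filter_upwards [hlam_ev] with l hl
      rw [le_div_iff₀ (by positivity)]
      calc ω (j + n l) * ω (i₀ - n l) * (c * ‖x i₀‖)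
          = (c * ω (j + n l)) * (‖x i₀‖ * ω (i₀ - n l)) := by ring
        _ ≤ (‖lam l‖ * ‖x (j + n l)‖ * ω (j + n l)) * (‖x i₀‖ * ω (i₀ - n l)) := by
            apply mul_le_mul_of_nonneg_right _ (mul_nonneg (norm_nonneg _) (hω _).le)
            exact mul_le_mul_of_nonneg_right hl (hω _).le
        _ = (‖x (j + n l)‖ * ω (j + n l)) * (‖lam l‖ * ‖x i₀‖ * ω (i₀ - n l)) := by ring
    · simpa using (hA.mul hB').div_const (c * ‖x i₀‖)
  set D : ℕ := (i₀ + j - 2*q).toNat with hD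
  have hfin : ∀ᶠ l in atTop, C ^ D * (ω (j + n l) * ω (i₀ - n l)) < ε
      ∧ (M:ℤ) + q - j ≤ (n l : ℤ) := by
    refine ((hmain.const_mul (C ^ D)).eventually (eventually_lt_nhds (by simpa using hε))).and
      (hntop.eventually_ge_atTop _)
  obtain ⟨l, hl1, hl2⟩ := hfin.exists
  refine ⟨((n l : ℤ) + j - q).toNat, by omega, ?_⟩
  have hm_eq : ((((n l : ℤ) + j - q).toNat : ℕ) : ℤ) = (n l : ℤ) + j - q := by omega
  rw [show q + (((n l : ℤ) + j - q).toNat : ℤ) = j + n l by omega,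
    show q - (((n l : ℤ) + j - q).toNat : ℤ) = 2*q - j - n l by omega]
  have h3 : ω (2*q - j - n l) ≤ C ^ D * ω (i₀ - n l) := by
    have h4 := omega_bound' hC hC0 (a := 2*q - j - (n l : ℤ)) (b := i₀ - n l) (by
      simp only [hi₀]; omega)
    rwa [show ((i₀ - (n l : ℤ)) - (2*q - j - (n l : ℤ))).toNat = D from by
      simp only [hD]; omega] at h4
  calc ω (j + n l) * ω (2*q - j - n l) ≤ ω (j + n l) * (C ^ D * ω (i₀ - n l)) :=
        mul_le_mul_of_nonneg_left h3 (hω _).le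
    _ = C ^ D * (ω (j + n l) * ω (i₀ - n l)) := by ring
    _ < ε := hl1

lemma memLp_of_finsupp (hp : p ≠ ∞) (hω : ∀ k, 0 < ω k) (f : ℤ → ℂ) (s : Finset ℤ)
    (hf : ∀ k ∉ s, f k = 0) : MemLp f p (wMeasure p ω) := by
  refine ⟨(measurable_from_top (f := f)).aestronglyMeasurable, ?_⟩
  rw [eLpNorm_formula hp]
  refine ENNReal.rpow_lt_top_of_nonneg (by positivity) ?_
  rw [tsum_eq_sum (f := fun k => (‖f k‖₊ : ℝ≥0∞) ^ p.toReal
      * ENNReal.ofReal ((ω k) ^ p.toReal)) (s := s) ?_]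
  · exact (ENNReal.sum_lt_top.2 (fun i _ => ENNReal.mul_lt_top
      (ENNReal.rpow_lt_top_of_nonneg (pt_pos hp).le ENNReal.coe_ne_top)
      ENNReal.ofReal_lt_top)).ne
  · intro k hk
    rw [hf k hk]
    simp [ENNReal.zero_rpow_of_pos (pt_pos hp)]

/-- The element of `Lp` with finitely supported coordinates `f`. -/
def elt (hp : p ≠ ∞) (hω : ∀ k, 0 < ω k) (f : ℤ → ℂ) (s : Finset ℤ)
    (hf : ∀ k ∉ s, f k = 0) : Lp ℂ p (wMeasure p ω) :=
  (memLp_of_finsupp hp hω f s hf).toLp f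

lemma elt_coe (hp : p ≠ ∞) (hω : ∀ k, 0 < ω k) (f : ℤ → ℂ) (s : Finset ℤ)
    (hf : ∀ k ∉ s, f k = 0) (k : ℤ) : (elt hp hω f s hf) k = f k :=
  congrFun ((ae_eq_iff_eq hp hω).1 (MemLp.coeFn_toLp _)) k

/-- evaluation as an additive monoid hom -/
def evalHom (hp : p ≠ ∞) (hω : ∀ k, 0 < ω k) (k : ℤ) : Lp ℂ p (wMeasure p ω) →+ ℂ :=
  AddMonoidHom.mk' (fun v => v k) (fun v w => coe_add hp hω v w k)

lemma norm_single (hp : p ≠ ∞) (hω : ∀ k, 0 < ω k) (i : ℤ) (c : ℂ)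
    (f : ℤ → ℂ) (s : Finset ℤ) (hf : ∀ k ∉ s, f k = 0)
    (hfs : ∀ k, f k = if k = i then c else 0) :
    ‖elt hp hω f s hf‖ = ‖c‖ * ω i := by
  rw [norm_eq hp]
  have h1 : ∀ k : ℤ, (‖(elt hp hω f s hf) k‖₊ : ℝ≥0∞) ^ p.toReal
      * ENNReal.ofReal ((ω k) ^ p.toReal)
      = if k = i then ENNReal.ofReal ((‖c‖ * ω i) ^ p.toReal) else 0 := by
    intro k
    rw [elt_coe, hfs k]
    by_cases hk : k = i
    · subst hk
      simp only [if_pos rfl]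
      exact term_eq hp hω (fun _ => c) k
    · simp [hk, ENNReal.zero_rpow_of_pos (pt_pos hp)]
  simp_rw [h1]
  rw [tsum_eq_single i (fun k hk => by rw [if_neg hk]), if_pos rfl,
    ENNReal.ofReal_rpow_of_nonneg (Real.rpow_nonneg (mul_nonneg (norm_nonneg _) (hω i).le) _)
      (one_div_pos.2 (pt_pos hp)).le,
    ← Real.rpow_mul (mul_nonneg (norm_nonneg _) (hω i).le),
    mul_one_div_cancel (pt_pos hp).ne', Real.rpow_one,
    ENNReal.toReal_ofReal (mul_nonneg (norm_nonneg _) (hω i).le)]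

lemma norm_le_sum (hp : p ≠ ∞) (hω : ∀ k, 0 < ω k) (v : Lp ℂ p (wMeasure p ω))
    (f : ℤ → ℂ) (s : Finset ℤ) (hf : ∀ k ∉ s, f k = 0) (hv : ∀ k, v k = f k) :
    ‖v‖ ≤ ∑ i ∈ s, ‖f i‖ * ω i := by
  induction s using Finset.induction generalizing v f with
  | empty =>
      have : v = 0 := Lp_ext hp hω (fun k => by
        rw [hv k, hf k (Finset.notMem_empty k), coe_zero hp hω])
      simp [this]
  | @insert i s' hi ih =>
      -- v = single + rest
      set g : ℤ → ℂ := fun k => if k = i then 0 else f k with hg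
      have hgs : ∀ k ∉ s', g k = 0 := by
        intro k hk
        by_cases h : k = i
        · simp [hg, h]
        · simp only [hg, if_neg h]
          exact hf k (by simp [h, hk])
      set u : Lp ℂ p (wMeasure p ω) := elt hp hω g s' hgs with hu
      set w : Lp ℂ p (wMeasure p ω) :=
        elt hp hω (fun k => if k = i then f i else 0) {i} (fun k hk => by
          simp at hk; simp [hk]) with hw
      have hvw : v = w + u := by
        refine Lp_ext hp hω (fun k => ?_)
        rw [hv k, coe_add hp hω, elt_coe, elt_coe]
        by_cases h : k = i
        · subst h; simp [hg]
        · simp [hg, h]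
      calc ‖v‖ ≤ ‖w‖ + ‖u‖ := by rw [hvw]; exact norm_add_le _ _
        _ ≤ ‖f i‖ * ω i + ∑ k ∈ s', ‖g k‖ * ω k := by
            refine add_le_add ?_ (ih u g hgs (fun k => elt_coe hp hω g s' hgs k))
            rw [norm_single hp hω i (f i) _ _ _ (fun k => rfl)]
        _ = ∑ k ∈ insert i s', ‖f k‖ * ω k := by
            rw [Finset.sum_insert hi]
            congr 1
            refine Finset.sum_congr rfl (fun k hk => ?_)
            have : k ≠ i := fun h => hi (h ▸ hk)
            simp [hg, this]

lemma trunc_approx (hp : p ≠ ∞) (hω : ∀ k, 0 < ω k) (v : Lp ℂ p (wMeasure p ω))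
    {δ : ℝ} (hδ : 0 < δ) :
    ∃ (s : Finset ℤ) (f : ℤ → ℂ) (hf : ∀ k ∉ s, f k = 0),
      ‖v - elt hp hω f s hf‖ < δ := by
  set G : ℤ → ℝ≥0∞ := fun k => (‖v k‖₊ : ℝ≥0∞) ^ p.toReal
    * ENNReal.ofReal ((ω k) ^ p.toReal) with hG
  have h := ENNReal.tendsto_tsum_compl_atTop_zero (f := G) (sum_ne_top hp v)
  have h2 : ∀ᶠ s : Finset ℤ in atTop,
      ∑' (x : {x // x ∉ s}), G x < ENNReal.ofReal (δ ^ p.toReal) :=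
    (ENNReal.nhds_zero_basis.tendsto_right_iff.1 h) _
      (ENNReal.ofReal_pos.2 (Real.rpow_pos_of_pos hδ _))
  obtain ⟨s, hs⟩ := h2.exists
  set f : ℤ → ℂ := fun k => if k ∈ s then v k else 0 with hfdef
  have hf : ∀ k ∉ s, f k = 0 := fun k hk => by simp [hfdef, hk]
  refine ⟨s, f, hf, ?_⟩
  set d := v - elt hp hω f s hf with hd
  have hdco : ∀ k, d k = if k ∈ s then 0 else v k := by
    intro k
    rw [hd, coe_sub hp hω, elt_coe]
    by_cases hk : k ∈ s <;> simp [hfdef, hk]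
  have hterm : ∀ k, (‖d k‖₊ : ℝ≥0∞) ^ p.toReal * ENNReal.ofReal ((ω k) ^ p.toReal)
      = if k ∈ s then 0 else G k := by
    intro k
    rw [hdco k]
    by_cases hk : k ∈ s
    · simp [hk, ENNReal.zero_rpow_of_pos (pt_pos hp)]
    · simp [hk, hG]
  have hsum : ∑' k, (‖d k‖₊ : ℝ≥0∞) ^ p.toReal * ENNReal.ofReal ((ω k) ^ p.toReal)
      = ∑' (x : {x // x ∉ s}), G x := by
    simp_rw [hterm]
    rw [show (∑' (x : {x // x ∉ s}), G x) = ∑' (x : ↑{x : ℤ | x ∉ s}), G ↑x from rfl,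
      tsum_subtype {x : ℤ | x ∉ s} G]
    congr 1
    funext k
    by_cases hk : k ∈ s <;> simp [Set.indicator_apply, hk]
  rw [norm_eq hp, hsum]
  have h3 : (∑' (x : {x // x ∉ s}), G x) ^ (1 / p.toReal)
      < ENNReal.ofReal (δ ^ p.toReal) ^ (1 / p.toReal) :=
    ENNReal.rpow_lt_rpow hs (one_div_pos.2 (pt_pos hp))
  rw [ENNReal.ofReal_rpow_of_nonneg (Real.rpow_nonneg hδ.le _) (one_div_pos.2 (pt_pos hp)).le,
    ← Real.rpow_mul hδ.le, mul_one_div_cancel (pt_pos hp).ne', Real.rpow_one] at h3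
  exact ENNReal.toReal_lt_of_lt_ofReal h3

lemma complex_rat_approx (c : ℂ) {ε : ℝ} (hε : 0 < ε) :
    ∃ q : ℚ × ℚ, ‖c - ((q.1 : ℝ) + (q.2 : ℝ) * Complex.I)‖ < ε := by
  obtain ⟨q1, hq1⟩ := exists_rat_near c.re (half_pos hε)
  obtain ⟨q2, hq2⟩ := exists_rat_near c.im (half_pos hε)
  refine ⟨(q1, q2), ?_⟩
  have h := Complex.norm_le_abs_re_add_abs_im (c - ((q1 : ℝ) + (q2 : ℝ) * Complex.I))
  simp only [Complex.sub_re, Complex.sub_im, Complex.add_re, Complex.add_im,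
    Complex.ofReal_re, Complex.ofReal_im, Complex.mul_re, Complex.mul_im,
    Complex.I_re, Complex.I_im] at h
  calc ‖c - ((q1 : ℝ) + (q2 : ℝ) * Complex.I)‖ ≤ |c.re - q1| + |c.im - q2| := by
        convert h using 3 <;> ring
    _ < ε/2 + ε/2 := add_lt_add hq1 hq2
    _ = ε := add_halves ε

lemma lp_separable (hp : p ≠ ∞) (hω : ∀ k, 0 < ω k) :
    TopologicalSpace.SeparableSpace (Lp ℂ p (wMeasure p ω)) := by
  set F : (ℤ →₀ ℚ × ℚ) → Lp ℂ p (wMeasure p ω) := fun φ =>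
    elt hp hω (fun k => ((φ k).1 : ℝ) + ((φ k).2 : ℝ) * Complex.I) φ.support
      (fun k hk => by
        rw [Finsupp.notMem_support_iff.1 hk]
        simp) with hF
  refine ⟨⟨Set.range F, Set.countable_range F, ?_⟩⟩
  rw [Metric.dense_iff]
  intro v r hr
  obtain ⟨s, f, hf, hvf⟩ := trunc_approx hp hω v (half_pos hr)
  -- rational approximation of each coordinate
  have hchoice : ∀ i : ℤ, ∃ q : ℚ × ℚ,
      ‖f i - ((q.1 : ℝ) + (q.2 : ℝ) * Complex.I)‖ * ω i < r / (2 * (s.card + 1)) := by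
    intro i
    obtain ⟨q, hq⟩ := complex_rat_approx (f i)
      (div_pos (div_pos hr (by positivity : (0:ℝ) < 2 * (s.card + 1))) (hω i))
    exact ⟨q, by rw [← lt_div_iff₀ (hω i)]; exact hq⟩
  choose qc hqc using hchoice
  set g : ℤ → ℚ × ℚ := fun i => if i ∈ s then qc i else 0 with hg
  set φ : ℤ →₀ ℚ × ℚ := Finsupp.onFinset s g (fun i => by
    rw [hg]
    intro h
    by_contra hi
    simp [hi] at h) with hφ
  refine ⟨F φ, Metric.mem_ball'.2 ?_, Set.mem_range_self φ⟩
  have hφco : ∀ k, (F φ) k = ((g k).1 : ℝ) + ((g k).2 : ℝ) * Complex.I := by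
    intro k
    rw [hF]
    exact elt_coe hp hω _ _ _ k
  -- the difference between elt f and F φ is supported in s
  have hdiff : ‖elt hp hω f s hf - F φ‖
      ≤ ∑ i ∈ s, ‖f i - (((g i).1 : ℝ) + ((g i).2 : ℝ) * Complex.I)‖ * ω i := by
    apply norm_le_sum hp hω _ _ s
    · intro k hk
      rw [hf k hk, hg]
      simp [hk]
    · intro k
      rw [coe_sub hp hω, elt_coe, hφco k]
  have hsum : ∑ i ∈ s, ‖f i - (((g i).1 : ℝ) + ((g i).2 : ℝ) * Complex.I)‖ * ω i
      < r / 2 := by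
    calc ∑ i ∈ s, ‖f i - (((g i).1 : ℝ) + ((g i).2 : ℝ) * Complex.I)‖ * ω i
        ≤ ∑ _i ∈ s, r / (2 * (s.card + 1)) := by
          refine Finset.sum_le_sum (fun i hi => ?_)
          rw [hg]
          simp only [if_pos hi]
          exact (hqc i).le
      _ = s.card * (r / (2 * (s.card + 1))) := by
          rw [Finset.sum_const, nsmul_eq_mul]
      _ < r / 2 := by
          rw [mul_div_assoc', div_lt_div_iff₀ (by positivity) (by norm_num : (0:ℝ) < 2)]
          nlinarith [Nat.cast_nonneg (α := ℝ) s.card, hr]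
  calc dist v (F φ) ≤ ‖v - elt hp hω f s hf‖ + ‖elt hp hω f s hf - F φ‖ := by
        rw [dist_eq_norm]
        exact norm_sub_le_norm_sub_add_norm_sub _ _ _
    _ < r / 2 + r / 2 := add_lt_add_of_lt_of_le hvf (le_trans hdiff hsum.le)
    _ = r := add_halves r

lemma dense_G (hp : p ≠ ∞) (hω : ∀ k, 0 < ω k)
    {C : ℝ} (hC1 : 1 ≤ C) (hC : ∀ k, ω k ≤ C * ω (k + 1))
    (B : Lp ℂ p (wMeasure p ω) →L[ℂ] Lp ℂ p (wMeasure p ω))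
    (hB : ∀ (x : Lp ℂ p (wMeasure p ω)) (k : ℤ), B x k = x (k + 1))
    (hS : ∀ q : ℤ, ∀ ε > 0, ∀ M : ℕ, ∃ m : ℕ, M ≤ m ∧ ω (q + m) * ω (q - m) < ε)
    (U : Set (Lp ℂ p (wMeasure p ω))) (hU : IsOpen U) (hUne : U.Nonempty) :
    Dense {z | ∃ (γ : ℂ) (m : ℕ), γ • (B ^ m) z ∈ U} := by
  have hC0 : (0:ℝ) ≤ C := le_trans zero_le_one hC1
  rw [Metric.dense_iff]
  intro w r hr
  obtain ⟨u₀, hu₀⟩ := hUne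
  obtain ⟨ε, hε, hball⟩ := Metric.isOpen_iff.1 hU u₀ hu₀
  obtain ⟨s₁, f₁, hf₁, hu'⟩ := trunc_approx hp hω u₀ (half_pos hε)
  obtain ⟨s₂, f₂, hf₂, hw'⟩ := trunc_approx hp hω w (half_pos hr)
  set u' := elt hp hω f₁ s₁ hf₁ with hu'def
  set w' := elt hp hω f₂ s₂ hf₂ with hw'def
  set N : ℕ := (s₁ ∪ s₂).sup (fun i => i.natAbs) with hN
  have hN1 : ∀ i ∈ s₁, i ≤ (N:ℤ) := by
    intro i hi
    have h2 : i.natAbs ≤ N := Finset.le_sup (f := fun i : ℤ => i.natAbs)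
      (Finset.mem_union_left s₂ hi)
    omega
  have hN2 : ∀ i ∈ s₂, i ≤ (N:ℤ) := by
    intro i hi
    have h2 : i.natAbs ≤ N := Finset.le_sup (f := fun i : ℤ => i.natAbs)
      (Finset.mem_union_right s₁ hi)
    omega
  by_cases hz : ∀ i, f₁ i = 0
  · -- u' = 0, so 0 ∈ U; use γ = 0
    have hu'0 : u' = 0 := Lp_ext hp hω (fun k => by rw [coe_zero hp hω, elt_coe, hz k])
    refine ⟨w', Metric.mem_ball'.2 (lt_of_lt_of_le (b := r/2) (by rw [dist_eq_norm]; exact hw') (by linarith)), 0, 0, hball ?_⟩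
    rw [Metric.mem_ball]
    have : (0:ℂ) • ((B ^ 0) w') = u' := by rw [hu'0]; simp
    rw [this, dist_eq_norm, norm_sub_rev]
    exact lt_of_lt_of_le hu' (by linarith)
  · push_neg at hz
    obtain ⟨i₁, hi₁⟩ := hz
    have hi₁s : i₁ ∈ s₁ := by
      by_contra h
      exact hi₁ (hf₁ i₁ h)
    set K₁ : ℝ := ∑ i ∈ s₂, ‖f₂ i‖ * C ^ (((N:ℤ) - i).toNat) with hK₁
    set K₂ : ℝ := ∑ i ∈ s₁, ‖f₁ i‖ * C ^ (((N:ℤ) - i).toNat) with hK₂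
    have hK₁0 : 0 ≤ K₁ := Finset.sum_nonneg (fun i _ => by positivity)
    have hK₂0 : 0 ≤ K₂ := Finset.sum_nonneg (fun i _ => by positivity)
    set δ : ℝ := r * ε / (6 * (K₁ * K₂ + 1)) with hδdef
    have hδ : 0 < δ := by
      apply div_pos (mul_pos hr hε)
      nlinarith
    obtain ⟨m, -, hmδ⟩ := hS (N:ℤ) δ hδ 0
    -- the forward-shifted u'
    have hFusupp : ∀ k ∉ s₁.image (fun i => i + (m:ℤ)), f₁ (k - m) = 0 := by
      intro k hk
      apply hf₁
      intro hmem
      exact hk (Finset.mem_image.2 ⟨k - m, hmem, by ring⟩)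
    set Fu := elt hp hω (fun k => f₁ (k - m)) (s₁.image (fun i => i + (m:ℤ))) hFusupp
      with hFu
    set b : ℝ := ‖Fu‖ with hb
    have hb0 : 0 < b := by
      rw [hb]
      rcases eq_or_lt_of_le (norm_nonneg Fu) with h | h
      · exfalso
        have hFu0 : Fu = 0 := by rwa [eq_comm, norm_eq_zero] at h
        have h3 := elt_coe hp hω (fun k => f₁ (k - m)) _ hFusupp (i₁ + m)
        rw [← hFu, hFu0, coe_zero hp hω] at h3
        simp only [add_sub_cancel_right] at h3
        exact hi₁ h3.symm
      · exact h
    have hbK : b ≤ K₂ * ω ((N:ℤ) + m) := by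
      have h1 : b ≤ ∑ i ∈ s₁, ‖f₁ i‖ * ω (i + m) := by
        rw [hb]
        have := norm_le_sum hp hω Fu (fun k => f₁ (k - m)) (s₁.image (fun i => i + (m:ℤ)))
          hFusupp (fun k => elt_coe hp hω _ _ _ k)
        rw [Finset.sum_image (fun a _ b _ h => by omega)] at this
        simpa only [show ∀ x : ℤ, x + (m:ℤ) - m = x from fun x => by ring] using this
      refine le_trans h1 ?_
      rw [hK₂, Finset.sum_mul]
      refine Finset.sum_le_sum (fun i hi => ?_)
      rw [mul_assoc]
      refine mul_le_mul_of_nonneg_left ?_ (norm_nonneg _)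
      have h2 := omega_bound' hC hC0 (a := i + (m:ℤ)) (b := (N:ℤ) + m)
        (by have := hN1 i hi; omega)
      rwa [show (((N:ℤ) + m) - (i + m)).toNat = ((N:ℤ) - i).toNat by omega] at h2
    set γ : ℝ := 3 * b / r with hγdef
    have hγ : 0 < γ := by positivity
    have hγC : ((γ:ℝ):ℂ) ≠ 0 := by
      simp only [ne_eq, Complex.ofReal_eq_zero]
      exact hγ.ne'
    set z := w' + ((γ:ℝ):ℂ)⁻¹ • Fu with hzdef
    -- B^m w' and its norm bound
    have haK : ‖(B ^ m) w'‖ ≤ K₁ * ω ((N:ℤ) - m) := by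
      have hsupp : ∀ k ∉ s₂.image (fun i => i - (m:ℤ)), f₂ (k + m) = 0 := by
        intro k hk
        apply hf₂
        intro hmem
        exact hk (Finset.mem_image.2 ⟨k + m, hmem, by ring⟩)
      have h1 := norm_le_sum hp hω ((B ^ m) w') (fun k => f₂ (k + m))
        (s₂.image (fun i => i - (m:ℤ))) hsupp
        (fun k => by rw [pow_coe hp hω B hB, elt_coe])
      rw [Finset.sum_image (fun a _ b _ h => by omega)] at h1
      simp only [show ∀ x : ℤ, x - (m:ℤ) + m = x from fun x => by ring] at h1
      refine le_trans h1 ?_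
      rw [hK₁, Finset.sum_mul]
      refine Finset.sum_le_sum (fun i hi => ?_)
      rw [mul_assoc]
      refine mul_le_mul_of_nonneg_left ?_ (norm_nonneg _)
      have h2 := omega_bound' hC hC0 (a := i - (m:ℤ)) (b := (N:ℤ) - m)
        (by have := hN2 i hi; omega)
      rwa [show (((N:ℤ) - m) - (i - m)).toNat = ((N:ℤ) - i).toNat by omega] at h2
    -- key algebraic identity
    have hkey : ((γ:ℝ):ℂ) • ((B ^ m) z) - u' = ((γ:ℝ):ℂ) • ((B ^ m) w') := by
      have hFuco : ∀ j : ℤ, Fu j = f₁ (j - m) := fun j => by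
        rw [hFu]; exact elt_coe hp hω _ _ _ j
      have hw'co : ∀ j : ℤ, w' j = f₂ j := fun j => by
        rw [hw'def]; exact elt_coe hp hω _ _ _ j
      have hu'co : ∀ j : ℤ, u' j = f₁ j := fun j => by
        rw [hu'def]; exact elt_coe hp hω _ _ _ j
      refine Lp_ext hp hω (fun k => ?_)
      rw [coe_sub hp hω, coe_smul hp hω, coe_smul hp hω, pow_coe hp hω B hB,
        pow_coe hp hω B hB, hzdef, coe_add hp hω, coe_smul hp hω, hu'co, hw'co, hFuco]
      simp only [add_sub_cancel_right]
      field_simp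
      ring
    refine ⟨z, ?_, ((γ:ℝ):ℂ), m, hball ?_⟩
    · -- z ∈ ball w r
      rw [Metric.mem_ball, dist_comm, dist_eq_norm]
      have h1 : ‖w - z‖ ≤ ‖w - w'‖ + ‖((γ:ℝ):ℂ)⁻¹ • Fu‖ := by
        calc ‖w - z‖ = ‖(w - w') + (-(((γ:ℝ):ℂ)⁻¹ • Fu))‖ := by
              rw [hzdef]; congr 1; abel
          _ ≤ ‖w - w'‖ + ‖-(((γ:ℝ):ℂ)⁻¹ • Fu)‖ := norm_add_le _ _
          _ = ‖w - w'‖ + ‖((γ:ℝ):ℂ)⁻¹ • Fu‖ := by rw [norm_neg]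
      have h2 : ‖((γ:ℝ):ℂ)⁻¹ • Fu‖ = r / 3 := by
        rw [norm_smul, norm_inv, Complex.norm_real, Real.norm_eq_abs, abs_of_pos hγ,
          ← hb, hγdef]
        field_simp
      calc ‖w - z‖ ≤ ‖w - w'‖ + ‖((γ:ℝ):ℂ)⁻¹ • Fu‖ := h1
        _ < r/2 + r/3 := by rw [h2]; linarith
        _ < r := by linarith
    · -- γ • B^m z ∈ ball u₀ ε
      rw [Metric.mem_ball, dist_eq_norm]
      have htri : ‖((γ:ℝ):ℂ) • ((B ^ m) z) - u₀‖
          ≤ ‖((γ:ℝ):ℂ) • ((B ^ m) z) - u'‖ + ‖u₀ - u'‖ := by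
        calc ‖((γ:ℝ):ℂ) • ((B ^ m) z) - u₀‖
            = ‖(((γ:ℝ):ℂ) • ((B ^ m) z) - u') + (-(u₀ - u'))‖ := by congr 1; abel
          _ ≤ _ := by
              refine le_trans (norm_add_le _ _) ?_
              rw [norm_neg]
      have hnorm1 : ‖((γ:ℝ):ℂ) • ((B ^ m) z) - u'‖ = γ * ‖(B ^ m) w'‖ := by
        rw [hkey, norm_smul, Complex.norm_real, Real.norm_eq_abs, abs_of_pos hγ]
      have hprod : γ * ‖(B ^ m) w'‖ < ε / 2 := by
        have hω1 : 0 < ω ((N:ℤ) + m) := hω _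
        have hω2 : 0 < ω ((N:ℤ) - m) := hω _
        have hstep1 : γ * ‖(B ^ m) w'‖ ≤ (3 / r) * (K₂ * ω ((N:ℤ) + m)) * (K₁ * ω ((N:ℤ) - m)) := by
          have : γ * ‖(B ^ m) w'‖ = (3 / r) * b * ‖(B ^ m) w'‖ := by
            rw [hγdef]; ring
          rw [this]
          have hb' : (3 / r) * b ≤ (3 / r) * (K₂ * ω ((N:ℤ) + m)) :=
            mul_le_mul_of_nonneg_left hbK (by positivity)
          exact mul_le_mul hb' haK (norm_nonneg _) (by positivity)
        have hstep2 : (3 / r) * (K₂ * ω ((N:ℤ) + m)) * (K₁ * ω ((N:ℤ) - m))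
            = (3 / r) * (K₁ * K₂) * (ω ((N:ℤ) + m) * ω ((N:ℤ) - m)) := by ring
        have hstep3 : (3 / r) * (K₁ * K₂) * (ω ((N:ℤ) + m) * ω ((N:ℤ) - m))
            ≤ (3 / r) * (K₁ * K₂ + 1) * (ω ((N:ℤ) + m) * ω ((N:ℤ) - m)) := by
          apply mul_le_mul_of_nonneg_right _ (by positivity)
          apply mul_le_mul_of_nonneg_left _ (by positivity)
          linarith
        have hstep4 : (3 / r) * (K₁ * K₂ + 1) * (ω ((N:ℤ) + m) * ω ((N:ℤ) - m))
            < (3 / r) * (K₁ * K₂ + 1) * δ := by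
          apply mul_lt_mul_of_pos_left _ (by positivity)
          exact hmδ
        have hstep5 : (3 / r) * (K₁ * K₂ + 1) * δ = ε / 2 := by
          rw [hδdef]
          field_simp
          ring
        linarith
      have hu'' : ‖u₀ - u'‖ < ε / 2 := hu'
      calc ‖((γ:ℝ):ℂ) • ((B ^ m) z) - u₀‖
          ≤ ‖((γ:ℝ):ℂ) • ((B ^ m) z) - u'‖ + ‖u₀ - u'‖ := htri
        _ < ε/2 + ε/2 := by rw [hnorm1]; exact add_lt_add hprod hu''
        _ = ε := add_halves ε

/-- if the projective orbit `{λ • B ^ n x : λ ∈ ℂ, n ∈ ℕ}` of some `x` under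
the bilateral backward shift has a non-zero norm limit point, then `B` is supercyclic. -/
theorem stmt16 (p : ENNReal) [Fact (1 ≤ p)] (hp : p ≠ ∞) (ω : ℤ → ℝ) (hω : ∀ k, 0 < ω k)
    (hbdd : ∃ C : ℝ, ∀ k : ℤ, ω k / ω (k + 1) ≤ C)
    (B : Lp ℂ p (wMeasure p ω) →L[ℂ] Lp ℂ p (wMeasure p ω))
    (hB : ∀ (x : Lp ℂ p (wMeasure p ω)) (k : ℤ), B x k = x (k + 1))
    (x : Lp ℂ p (wMeasure p ω))
    (lam : ℕ → ℂ) (n : ℕ → ℕ) (hn : StrictMono n)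
    (y : Lp ℂ p (wMeasure p ω)) (hy : y ≠ 0)
    (hconv : Tendsto (fun k => lam k • (B ^ n k) x) atTop (nhds y)) :
    ∃ z : Lp ℂ p (wMeasure p ω),
      Dense {w : Lp ℂ p (wMeasure p ω) | ∃ (γ : ℂ) (m : ℕ), w = γ • (B ^ m) z} := by
  obtain ⟨C0, hC0⟩ := hbdd
  set C : ℝ := max C0 1 with hCdef
  have hC1 : 1 ≤ C := le_max_right _ _
  have hC : ∀ k, ω k ≤ C * ω (k + 1) := by
    intro k
    have h1 : ω k / ω (k + 1) ≤ C := le_trans (hC0 k) (le_max_left _ _)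
    rw [div_le_iff₀ (hω (k + 1))] at h1
    linarith
  have hS := salas hp hω hC1 hC B hB x lam n hn y hy hconv
  haveI := lp_separable (p := p) (ω := ω) hp hω
  haveI : SecondCountableTopology (Lp ℂ p (wMeasure p ω)) :=
    UniformSpace.secondCountable_of_separable _
  set Bs := TopologicalSpace.countableBasis (Lp ℂ p (wMeasure p ω)) with hBsdef
  have hBs := TopologicalSpace.isBasis_countableBasis (Lp ℂ p (wMeasure p ω))
  set G : Set (Lp ℂ p (wMeasure p ω)) → Set (Lp ℂ p (wMeasure p ω)) :=
    fun U => {z | ∃ (γ : ℂ) (m : ℕ), γ • (B ^ m) z ∈ U} with hGdef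
  have hGopen : ∀ U, IsOpen U → IsOpen (G U) := by
    intro U hU
    have h2 : G U = ⋃ (γ : ℂ) (m : ℕ), (fun z => γ • (B ^ m) z) ⁻¹' U := by
      ext z
      simp [hGdef, Set.mem_iUnion]
    rw [h2]
    exact isOpen_iUnion fun γ => isOpen_iUnion fun m =>
      hU.preimage ((B ^ m).continuous.const_smul γ)
  have hdense : Dense (⋂ U ∈ {U ∈ Bs | U.Nonempty}, G U) := by
    refine dense_biInter_of_isOpen
      (fun U hU => hGopen U (TopologicalSpace.isOpen_of_mem_countableBasis hU.1))
      ((TopologicalSpace.countable_countableBasis _).mono (Set.sep_subset _ _))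
      (fun U hU => dense_G hp hω hC1 hC B hB hS U
        (TopologicalSpace.isOpen_of_mem_countableBasis hU.1) hU.2)
  obtain ⟨z, hz⟩ := hdense.nonempty
  refine ⟨z, ?_⟩
  rw [hBs.dense_iff]
  intro U hU hUne
  have hzU : z ∈ G U := by
    have h3 := Set.mem_iInter₂.1 hz U
    exact h3 ⟨hU, hUne⟩
  obtain ⟨γ, m, hγm⟩ := hzU
  exact ⟨γ • (B ^ m) z, hγm, ⟨γ, m, rfl⟩⟩
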